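/- arXiv:1011.3774 — 6 statements merged into one kernel-verified Lean document; each statement's English description precedes it below -/
import Mathlib

section
/- For every real a ≥ 3 and every real y with |y| ≤ 2π, one has |f_a(-a - 6·ln a + iy)| = a⁻⁵·√((1 + 6·ln a)² + y²) < (a - 1)/2. (Thus f_a maps the left vertical boundary of the pseudo-rectangle V_a strictly inside the disc of radius (a-1)/2 about the origin.) -/
/-!
On the line `Re z = -a - 6 log a` one has `|exp (z + a)| = a⁻⁶`, so `|f_a z| = a⁻⁵ |z - (1 - a)|`.
That distance is at most `1 + 6 log a + 2π ≤ 7a` (using `log a ≤ a - 1` and `π ≤ 4`), and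
`7a · a⁻⁵ < (a - 1)/2` because `(a - 1) a⁴ ≥ 2 · 3⁴ > 14`.
-/

open Complex

lemma norm_mul_sub_mul_exp_add (a x y : ℝ) :
    ‖(a : ℂ) * ((x + y * I) - (1 - a)) * exp ((x + y * I) + a)‖
      = |a| * Real.sqrt ((x + a - 1) ^ 2 + y ^ 2) * Real.exp (x + a) := by
  rw [norm_mul, norm_mul, norm_exp, norm_real, Real.norm_eq_abs, norm_def, normSq_apply]
  congr 3 <;> simp
  ring

lemma Real.exp_neg_nat_mul_log {a : ℝ} (ha : 0 < a) (n : ℕ) :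
    Real.exp (-(n * Real.log a)) = (a ^ n)⁻¹ := by
  rw [Real.exp_neg, Real.exp_nat_mul, Real.exp_log ha]

lemma Real.sqrt_sq_add_sq_le_abs_add_abs (u v : ℝ) : √(u ^ 2 + v ^ 2) ≤ |u| + |v| :=
  Real.sqrt_le_iff.mpr ⟨by positivity, by nlinarith [sq_abs u, sq_abs v, abs_nonneg u, abs_nonneg v]⟩

lemma fourteen_lt_sub_one_mul_pow_four {a : ℝ} (ha : 3 ≤ a) : 14 < (a - 1) * a ^ 4 :=
  calc (14 : ℝ) < (3 - 1) * 3 ^ 4 := by norm_num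
    _ ≤ (a - 1) * a ^ 4 := by gcongr; linarith

/-- For every real `a ≥ 3` and every real `y` with `|y| ≤ 2π`, one has
`|f_a(-a - 6 ln a + iy)| = a⁻⁵ √((1 + 6 ln a)² + y²) < (a - 1)/2`. -/
theorem stmt_6 (a : ℝ) (ha : 3 ≤ a) (y : ℝ) (hy : |y| ≤ 2 * Real.pi) :
    ‖(fun z : ℂ => (a : ℂ) * (z - (1 - (a : ℂ))) * Complex.exp (z + (a : ℂ)))
        (((-a - 6 * Real.log a : ℝ) : ℂ) + (y : ℂ) * Complex.I)‖
      = (a ^ 5)⁻¹ * Real.sqrt ((1 + 6 * Real.log a) ^ 2 + y ^ 2) ∧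
    (a ^ 5)⁻¹ * Real.sqrt ((1 + 6 * Real.log a) ^ 2 + y ^ 2) < (a - 1) / 2 := by
  have ha0 : 0 < a := by linarith
  have hlog : 0 ≤ Real.log a := Real.log_nonneg (by linarith)
  constructor
  · have hexp : Real.exp (-a - 6 * Real.log a + a) = (a ^ 6)⁻¹ := by
      rw [← Real.exp_neg_nat_mul_log ha0]; push_cast; ring_nf
    rw [norm_mul_sub_mul_exp_add, hexp, abs_of_pos ha0]
    field_simp
    ring_nf
  · have hsqrt : √((1 + 6 * Real.log a) ^ 2 + y ^ 2) ≤ 7 * a := by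
      have := Real.sqrt_sq_add_sq_le_abs_add_abs (1 + 6 * Real.log a) y
      rw [abs_of_nonneg (by positivity)] at this
      linarith [Real.log_le_sub_one_of_pos ha0, Real.pi_le_four]
    rw [inv_mul_lt_iff₀ (by positivity)]
    nlinarith [fourteen_lt_sub_one_mul_pow_four ha]
end

section
/- For every real a ≥ 3 and every real y with |y| ≤ 2π, one has |f_a((1 - a)/2 + iy)| ≥ a·exp((a + 1)/2)·(a - 1)/2 > √((a + 6·ln a)² + 4π²). (Thus f_a maps the right vertical boundary of the pseudo-rectangle V_a strictly outside the disc of radius √((a + 6·ln a)² + 4π²) about the origin.) -/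
/-!
On the line `Re z = (1 - a)/2` we have `|exp (z + a)| = exp ((a + 1)/2)` and
`|z - (1 - a)| ≥ Re (z - (1 - a)) = (a - 1)/2`, which gives the lower bound. For the strict
inequality, `exp ((a + 1)/2) ≥ e² > 7` and `log a ≤ a - 1` reduce it to the polynomial
inequality `(7a - 6)² + 40 < (7a(a - 1)/2)²` for `a ≥ 3`.
-/

open Real

lemma norm_mul_sub_mul_exp (a : ℝ) (z : ℂ) :
    ‖(a : ℂ) * (z - (1 - (a : ℂ))) * Complex.exp (z + (a : ℂ))‖
      = |a| * ‖z - (1 - (a : ℂ))‖ * exp (z.re + a) := by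
  simp only [norm_mul, Complex.norm_exp, Complex.norm_real, Real.norm_eq_abs, Complex.add_re,
    Complex.ofReal_re]

lemma le_norm_sub_one_sub_of_re_eq {a : ℝ} {z : ℂ} (hz : z.re = (1 - a) / 2) :
    (a - 1) / 2 ≤ ‖z - (1 - (a : ℂ))‖ := by
  have hre : (z - (1 - (a : ℂ))).re = (a - 1) / 2 := by
    simp only [Complex.sub_re, Complex.one_re, Complex.ofReal_re, hz]; ring
  exact hre ▸ (le_abs_self _).trans (Complex.abs_re_le_norm _)

lemma seven_lt_exp_two : (7 : ℝ) < exp 2 := by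
  have he := exp_one_gt_d9
  have : exp 2 = exp 1 ^ 2 := by rw [← exp_nat_mul]; norm_num
  nlinarith [exp_pos 1]

lemma seven_lt_exp_half_add_one {a : ℝ} (ha : 3 ≤ a) : (7 : ℝ) < exp ((a + 1) / 2) :=
  seven_lt_exp_two.trans_le (exp_le_exp.2 (by linarith))

lemma sqrt_lt_of_three_le {a : ℝ} (ha : 3 ≤ a) :
    √((a + 6 * log a) ^ 2 + 4 * π ^ 2) < 7 / 2 * a * (a - 1) := by
  have hlog : log a ≤ a - 1 := log_le_sub_one_of_pos (by linarith)
  have hlog0 : 0 ≤ log a := log_nonneg (by linarith)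
  have hsq : (a + 6 * log a) ^ 2 ≤ (7 * a - 6) ^ 2 := by nlinarith
  have hpi : 4 * π ^ 2 < 40 := by nlinarith [pi_lt_d2, pi_pos]
  have hpoly : (7 * a - 6) ^ 2 + 40 < (7 / 2 * a * (a - 1)) ^ 2 := by
    nlinarith [sq_nonneg (a - 3)]
  rw [sqrt_lt' (by nlinarith)]
  linarith

lemma mul_sub_one_le_mul_exp_mul {a : ℝ} (ha : 3 ≤ a) :
    7 / 2 * a * (a - 1) ≤ a * exp ((a + 1) / 2) * ((a - 1) / 2) := by
  have h := seven_lt_exp_half_add_one ha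
  have hpos : 0 ≤ a * ((a - 1) / 2) := by nlinarith
  nlinarith [mul_le_mul_of_nonneg_left h.le hpos]

theorem stmt_7_general (a : ℝ) (ha : 3 ≤ a) (y : ℝ) :
    a * Real.exp ((a + 1) / 2) * ((a - 1) / 2)
      ≤ ‖((fun z : ℂ => (a : ℂ) * (z - (1 - (a : ℂ))) * Complex.exp (z + (a : ℂ)))
          ((((1 - a) / 2 : ℝ) : ℂ) + (y : ℂ) * Complex.I))‖ ∧
    Real.sqrt ((a + 6 * Real.log a) ^ 2 + 4 * Real.pi ^ 2)
      < a * Real.exp ((a + 1) / 2) * ((a - 1) / 2) := by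
  set z : ℂ := (((1 - a) / 2 : ℝ) : ℂ) + (y : ℂ) * Complex.I
  have hz : z.re = (1 - a) / 2 := by simp [z]
  refine ⟨?_, (sqrt_lt_of_three_le ha).trans_le (mul_sub_one_le_mul_exp_mul ha)⟩
  rw [norm_mul_sub_mul_exp, hz, abs_of_nonneg (by linarith : (0 : ℝ) ≤ a),
    show (1 - a) / 2 + a = (a + 1) / 2 by ring, mul_right_comm]
  gcongr
  exact le_norm_sub_one_sub_of_re_eq hz

/-- For every real `a ≥ 3` and every real `y` with `|y| ≤ 2π`, one has
`|f_a((1 - a)/2 + iy)| ≥ a e^{(a+1)/2} (a - 1)/2 > √((a + 6 ln a)² + 4π²)`. -/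
theorem stmt_7 (a : ℝ) (ha : 3 ≤ a) (y : ℝ) (hy : |y| ≤ 2 * Real.pi) :
    a * Real.exp ((a + 1) / 2) * ((a - 1) / 2)
      ≤ ‖((fun z : ℂ => (a : ℂ) * (z - (1 - (a : ℂ))) * Complex.exp (z + (a : ℂ)))
          ((((1 - a) / 2 : ℝ) : ℂ) + (y : ℂ) * Complex.I))‖ ∧
    Real.sqrt ((a + 6 * Real.log a) ^ 2 + 4 * Real.pi ^ 2)
      < a * Real.exp ((a + 1) / 2) * ((a - 1) / 2) :=
  stmt_7_general a ha y
end

section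
/- For every real a ≥ 3 there exists R > 0 such that for all real x ≥ R: a·exp(a + x - 1)·√((x + a - 2)² + 4π²) < a·exp(a + x)·(x + a - 1) - 1. (This is the key inequality showing that the image under f_a of the left boundary of a target V(ξ_n, η_{n+ℓ}) lies to the left of Re(z) = ξ_{n+1} - 1.) -/
/-- For every real `a ≥ 3` there exists `R > 0` such that for all real `x ≥ R`:
`a e^{a+x-1} √((x+a-2)² + 4π²) < a e^{a+x} (x+a-1) - 1`. -/
theorem stmt_9 (a : ℝ) (ha : 3 ≤ a) :
    ∃ R : ℝ, 0 < R ∧ ∀ x : ℝ, R ≤ x →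
      a * Real.exp (a + x - 1) * Real.sqrt ((x + a - 2) ^ 2 + 4 * Real.pi ^ 2)
        < a * Real.exp (a + x) * (x + a - 1) - 1 := by
  have hpi : (3:ℝ) < Real.pi := Real.pi_gt_three
  refine ⟨2 * Real.pi + 2, by positivity, fun x hx => ?_⟩
  have hE1 : (1:ℝ) ≤ Real.exp (a + x) := by
    apply Real.one_le_exp; nlinarith
  have hE : Real.exp (a + x - 1) ≤ Real.exp (a + x) / 2 := by
    have h2 : (2:ℝ) ≤ Real.exp 1 := by
      have := Real.exp_one_gt_d9; linarith
    have : Real.exp (a + x - 1) * 2 ≤ Real.exp (a + x - 1) * Real.exp 1 := by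
      nlinarith [Real.exp_pos (a + x - 1)]
    rw [← Real.exp_add] at this
    rw [le_div_iff₀ (by norm_num)]
    calc Real.exp (a + x - 1) * 2 ≤ Real.exp (a + x - 1 + 1) := this
      _ = Real.exp (a + x) := by ring_nf
  have hsq : Real.sqrt ((x + a - 2) ^ 2 + 4 * Real.pi ^ 2) ≤ x + a - 2 + 2 * Real.pi := by
    have hnn : (0:ℝ) ≤ x + a - 2 + 2 * Real.pi := by nlinarith
    have h := Real.sqrt_le_sqrt (show (x + a - 2) ^ 2 + 4 * Real.pi ^ 2 ≤ (x + a - 2 + 2 * Real.pi)^2 by nlinarith)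
    rwa [Real.sqrt_sq hnn] at h
  have hsqnn : 0 ≤ Real.sqrt ((x + a - 2) ^ 2 + 4 * Real.pi ^ 2) := Real.sqrt_nonneg _
  have hEp : 0 < Real.exp (a + x - 1) := Real.exp_pos _
  nlinarith [mul_le_mul hE hsq hsqnn (by positivity : (0:ℝ) ≤ Real.exp (a + x) / 2),
    mul_le_mul_of_nonneg_right hE1 (show (0:ℝ) ≤ (x + a)/2 - Real.pi by nlinarith),
    mul_pos (Real.exp_pos (a + x)) (show (0:ℝ) < x + a - 1 by nlinarith)]
end

section
/- For every real a ≥ 3 there exists R > 0 such that for all real x ≥ R: a·exp(a + x + 1)·(x + a) > a·exp(a + x)·√((x + a - 1)² + 4π²) + 1. (This is the key inequality showing that the image under f_a of the right boundary of a target V(ξ_n, η_{n+ℓ}) lies to the right of Re(z) = η_{n+ℓ+1} + 1.) -/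
/-- For every real `a ≥ 3` there exists `R > 0` such that for all real `x ≥ R`:
`a e^{a+x+1} (x+a) > a e^{a+x} √((x+a-1)² + 4π²) + 1`. -/
theorem stmt_10 (a : ℝ) (ha : 3 ≤ a) :
    ∃ R : ℝ, 0 < R ∧ ∀ x : ℝ, R ≤ x →
      a * Real.exp (a + x) * Real.sqrt ((x + a - 1) ^ 2 + 4 * Real.pi ^ 2) + 1
        < a * Real.exp (a + x + 1) * (x + a) := by
  refine ⟨2 * Real.pi + 1, by positivity, fun x hx => ?_⟩
  have hπ := Real.pi_gt_three
  have hπ' := Real.pi_pos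
  have hsq : Real.sqrt ((x + a - 1) ^ 2 + 4 * Real.pi ^ 2)
      ≤ (x + a - 1) + 2 * Real.pi := by
    rw [show (x + a - 1) + 2 * Real.pi
        = Real.sqrt (((x + a - 1) + 2 * Real.pi) ^ 2) from
        (Real.sqrt_sq (by nlinarith)).symm]
    apply Real.sqrt_le_sqrt
    nlinarith
  have hE1 : (1 : ℝ) ≤ Real.exp (a + x) := Real.one_le_exp (by nlinarith)
  have he : (2 : ℝ) < Real.exp 1 := by
    have := Real.exp_one_gt_d9
    linarith
  have hmul : a * Real.exp (a + x) * Real.sqrt ((x + a - 1) ^ 2 + 4 * Real.pi ^ 2)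
      ≤ a * Real.exp (a + x) * ((x + a - 1) + 2 * Real.pi) :=
    mul_le_mul_of_nonneg_left hsq (by positivity)
  have hd : x + a - 1 + 2 * Real.pi + 5 ≤ Real.exp 1 * (x + a) := by nlinarith
  have hk := mul_le_mul_of_nonneg_left hd
    (show (0 : ℝ) ≤ a * Real.exp (a + x) by positivity)
  have h3 : (3 : ℝ) ≤ a * Real.exp (a + x) := by nlinarith
  rw [Real.exp_add (a + x) 1]
  nlinarith [hmul, hk, h3]
end

section
/- The projection map π : Σ_A → Σ_B that erases all subscripts is exactly 2-to-1 and surjective: for every binary sequence t ∈ Σ_B there exist exactly two allowable extended sequences t¹, t² ∈ Σ_A with π(t¹) = π(t²) = t, and t² is obtained from t¹ by interchanging the subscripts 1 ↔ 2 at every position (and conversely). -/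
/-- The four extended symbols `0₁, 0₂, 1₁, 1₂`. -/
inductive ESym : Type
  | z1 : ESym  -- 0₁
  | z2 : ESym  -- 0₂
  | o1 : ESym  -- 1₁
  | o2 : ESym  -- 1₂
  deriving DecidableEq

open ESym

/-- Allowed transitions of the transition matrix `A`:
`0₁ → {0₁, 1₁}`, `0₂ → {0₂, 1₂}`, `1₁ → {0₂, 1₂}`, `1₂ → {0₁, 1₁}`. -/
def ESym.allowed : ESym → ESym → Prop
  | z1, z1 => True
  | z1, o1 => True
  | z2, z2 => True
  | z2, o2 => True
  | o1, z2 => True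
  | o1, o2 => True
  | o2, z1 => True
  | o2, o1 => True
  | _, _ => False

/-- The space `Σ_A` of allowable extended sequences. -/
def SigmaA : Set (ℕ → ESym) := {s | ∀ i : ℕ, (s i).allowed (s (i + 1))}

/-- The projection erasing subscripts: `0₁, 0₂ ↦ 0 (false)` and `1₁, 1₂ ↦ 1 (true)`. -/
def ESym.proj : ESym → Bool
  | z1 => false
  | z2 => false
  | o1 => true
  | o2 => true

/-- Interchanging subscripts `1 ↔ 2`. -/
def ESym.swap : ESym → ESym
  | z1 => z2
  | z2 => z1
  | o1 => o2
  | o2 => o1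

/-- Subscript of an extended symbol: `false` for subscript 1, `true` for subscript 2. -/
def ESym.sub : ESym → Bool
  | z1 => false
  | z2 => true
  | o1 => false
  | o2 => true

/-- Encode a (value, subscript) pair as an extended symbol. -/
def ESym.enc : Bool → Bool → ESym
  | false, false => z1
  | false, true => z2
  | true, false => o1
  | true, true => o2

lemma ESym.enc_decode (a : ESym) : ESym.enc a.proj a.sub = a := by
  cases a <;> rfl

lemma ESym.allowed_iff (a b : ESym) :
    a.allowed b ↔ b.sub = xor a.sub a.proj := by
  cases a <;> cases b <;> simp [ESym.allowed, ESym.sub, ESym.proj]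

lemma ESym.proj_enc (v p : Bool) : (ESym.enc v p).proj = v := by
  cases v <;> cases p <;> rfl

lemma ESym.sub_enc (v p : Bool) : (ESym.enc v p).sub = p := by
  cases v <;> cases p <;> rfl

lemma ESym.swap_enc (v p : Bool) : (ESym.enc v p).swap = ESym.enc v !p := by
  cases v <;> cases p <;> rfl

/-- The projection map `π : Σ_A → Σ_B` erasing all subscripts is exactly 2-to-1 and
surjective: for every binary sequence `t ∈ Σ_B` there exist exactly two allowable
extended sequences `t¹, t² ∈ Σ_A` with `π(t¹) = π(t²) = t`, and `t²` is obtained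
from `t¹` by interchanging the subscripts `1 ↔ 2` at every position. -/
theorem stmt_15 (t : ℕ → Bool) :
    ∃ t1 t2 : ℕ → ESym, t1 ∈ SigmaA ∧ t2 ∈ SigmaA ∧
      (∀ i : ℕ, (t1 i).proj = t i) ∧ (∀ i : ℕ, (t2 i).proj = t i) ∧
      (∀ i : ℕ, t2 i = (t1 i).swap) ∧ t1 ≠ t2 ∧
      (∀ s : ℕ → ESym, s ∈ SigmaA → (∀ i : ℕ, (s i).proj = t i) → s = t1 ∨ s = t2) := by
  -- parity of number of ones before position i
  let f : ℕ → Bool := fun i => Nat.rec false (fun j p => xor p (t j)) i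
  have hf : ∀ i, f (i + 1) = xor (f i) (t i) := fun i => rfl
  refine ⟨fun i => ESym.enc (t i) (f i), fun i => ESym.enc (t i) (!f i),
    ?_, ?_, ?_, ?_, ?_, ?_, ?_⟩
  · intro i
    rw [ESym.allowed_iff, ESym.sub_enc, ESym.sub_enc, ESym.proj_enc, hf]
  · intro i
    rw [ESym.allowed_iff, ESym.sub_enc, ESym.sub_enc, ESym.proj_enc, hf]
    cases f i <;> cases t i <;> rfl
  · intro i; exact ESym.proj_enc _ _
  · intro i; exact ESym.proj_enc _ _
  · intro i; rw [ESym.swap_enc]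
  · intro h
    have := congrFun h 0
    have h2 := congrArg ESym.sub this
    rw [ESym.sub_enc, ESym.sub_enc] at h2
    simp at h2
  · intro s hs hp
    have key : ∀ i, s i = ESym.enc (t i) (xor (s 0).sub (f i)) := by
      intro i
      induction i with
      | zero =>
        show s 0 = ESym.enc (t 0) (xor (s 0).sub false)
        rw [Bool.xor_false, ← hp 0, ESym.enc_decode]
      | succ j ih =>
        have ha := (ESym.allowed_iff _ _).mp (hs j)
        rw [ih] at ha
        rw [ESym.sub_enc, ESym.proj_enc] at ha
        rw [← hp (j + 1), ← ESym.enc_decode (s (j + 1)), ha, hf]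
        congr 1
        · rw [ESym.proj_enc]
        · cases (s 0).sub <;> cases f j <;> cases t j <;> rfl
    cases h0 : (s 0).sub with
    | false =>
      left; funext i; rw [key i, h0, Bool.false_xor]
    | true =>
      right; funext i; rw [key i, h0, Bool.true_xor]
end

section
/- For every complex parameter a ≠ 0, the fixed point -a is not an exceptional value of f_a: the preimage set {z ∈ ℂ : f_a(z) = -a} is infinite. -/
set_option maxHeartbeats 800000
open Real

noncomputable def phi (v : ℝ) : ℝ := v / Real.sin v * Real.exp (-v * Real.cos v / Real.sin v)

lemma sin_pos_on (k : ℕ) {v : ℝ} (hv : v ∈ Set.Icc (π/4 + (k+1)*(2*π)) (π/2 + (k+1)*(2*π))) :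
    Real.sqrt 2 / 2 ≤ Real.sin v := by
  have hπ := Real.pi_pos
  set t := v - (k+1)*(2*π) with ht
  have h1 : v = t + (k+1)*(2*π) := by ring
  have h2 : Real.sin v = Real.sin t := by
    rw [h1]; exact_mod_cast Real.sin_add_nat_mul_two_pi t (k+1)
  rw [h2]
  have ht1 : π/4 ≤ t := by have := hv.1; simp only [ht]; linarith
  have ht2 : t ≤ π/2 := by have := hv.2; simp only [ht]; linarith
  calc Real.sqrt 2 / 2 = Real.sin (π/4) := (Real.sin_pi_div_four).symm
    _ ≤ Real.sin t := Real.sin_le_sin_of_le_of_le_pi_div_two (by linarith) ht2 ht1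

lemma exists_v (k : ℕ) : ∃ v ∈ Set.Icc (π/4 + (k+1)*(2*π)) (π/2 + (k+1)*(2*π)),
    phi v = Real.exp (-1) := by
  have hπ : 3.141592 < π := Real.pi_gt_d6
  have hπ' := Real.pi_pos
  have hss : Real.sqrt 2 * Real.sqrt 2 = 2 := Real.mul_self_sqrt (by norm_num)
  have hsqrt : (1:ℝ) ≤ Real.sqrt 2 := by nlinarith [Real.sqrt_nonneg 2]
  have hsqrt' : Real.sqrt 2 ≤ 2 := by nlinarith [Real.sqrt_nonneg 2]
  set A := π/4 + (k+1:ℝ)*(2*π) with hA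
  set B := π/2 + (k+1:ℝ)*(2*π) with hB
  clear_value A B
  have hk1 : (1:ℝ) ≤ (k:ℝ)+1 := by have := Nat.cast_nonneg (α:=ℝ) k; linarith
  have hk2 : 2*π ≤ ((k:ℝ)+1)*(2*π) := le_mul_of_one_le_left (by positivity) hk1
  have hAB : A ≤ B := by simp only [hA, hB]; linarith
  have hApos : 7 ≤ A := by rw [hA]; linarith
  have hBpos : 1 ≤ B := by rw [hB]; linarith
  have hsinpos : ∀ v ∈ Set.Icc A B, 0 < Real.sin v := by
    intro v hv
    rw [hA, hB] at hv
    have := sin_pos_on k hv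
    nlinarith
  have hcont : ContinuousOn phi (Set.Icc A B) := by
    apply ContinuousOn.mul
    · exact ContinuousOn.div continuousOn_id (Real.continuous_sin.continuousOn)
        (fun v hv => ne_of_gt (hsinpos v hv))
    · apply ContinuousOn.rexp
      exact ContinuousOn.div (by fun_prop) (Real.continuous_sin.continuousOn)
        (fun v hv => ne_of_gt (hsinpos v hv))
  have hsinA : Real.sin A = Real.sqrt 2 / 2 := by
    rw [hA, show π/4 + ((k:ℝ)+1)*(2*π) = π/4 + ((k+1:ℕ):ℝ)*(2*π) by push_cast; ring,
      Real.sin_add_nat_mul_two_pi, Real.sin_pi_div_four]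
  have hcosA : Real.cos A = Real.sqrt 2 / 2 := by
    rw [hA, show π/4 + ((k:ℝ)+1)*(2*π) = π/4 + ((k+1:ℕ):ℝ)*(2*π) by push_cast; ring,
      Real.cos_add_nat_mul_two_pi, Real.cos_pi_div_four]
  have hsinB : Real.sin B = 1 := by
    rw [hB, show π/2 + ((k:ℝ)+1)*(2*π) = π/2 + ((k+1:ℕ):ℝ)*(2*π) by push_cast; ring,
      Real.sin_add_nat_mul_two_pi, Real.sin_pi_div_two]
  have hcosB : Real.cos B = 0 := by
    rw [hB, show π/2 + ((k:ℝ)+1)*(2*π) = π/2 + ((k+1:ℕ):ℝ)*(2*π) by push_cast; ring,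
      Real.cos_add_nat_mul_two_pi, Real.cos_pi_div_two]
  have hs2 : (0:ℝ) < Real.sqrt 2 / 2 := by nlinarith
  have hphiA : phi A ≤ Real.exp (-1) := by
    have e1 : -A * (Real.sqrt 2/2) / (Real.sqrt 2/2) = -A :=
      mul_div_cancel_right₀ (-A) (ne_of_gt hs2)
    have e2 : A / (Real.sqrt 2/2) = Real.sqrt 2 * A := by
      rw [div_eq_iff (ne_of_gt hs2)]
      linear_combination (-(A/2)) * hss
    have h1 : phi A = Real.sqrt 2 * A * Real.exp (-A) := by
      unfold phi; rw [hsinA, hcosA, e1, e2]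
    rw [h1]
    have hcube : A^3/6 ≤ Real.exp A := by
      have h := Real.sum_le_exp_of_nonneg (by linarith : (0:ℝ) ≤ A) 4
      have hsum : A^3/6 ≤ ∑ i ∈ Finset.range 4, A ^ i / (i.factorial : ℝ) := by
        rw [Finset.sum_range_succ, Finset.sum_range_succ, Finset.sum_range_succ,
          Finset.sum_range_succ]
        simp [Nat.factorial]
        nlinarith
      linarith
    have hexpA : Real.exp (-A) ≤ 6 / A^3 := by
      rw [Real.exp_neg, inv_eq_one_div, div_le_div_iff₀ (Real.exp_pos A) (by positivity)]
      nlinarith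
    have h3 : Real.sqrt 2 * A * Real.exp (-A) ≤ Real.sqrt 2 * A * (6 / A^3) := by
      apply mul_le_mul_of_nonneg_left hexpA (by nlinarith)
    have h4 : Real.sqrt 2 * A * (6 / A^3) ≤ 1/3 := by
      have e3 : Real.sqrt 2 * A * (6 / A^3) = 6 * Real.sqrt 2 / A^2 := by
        field_simp
      rw [e3, div_le_div_iff₀ (by positivity) (by norm_num)]
      nlinarith
    have h6 : (1:ℝ)/3 ≤ Real.exp (-1) := by
      rw [Real.exp_neg, one_div, inv_le_inv₀ (by norm_num) (Real.exp_pos 1)]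
      calc Real.exp 1 ≤ 2.7182818286 := Real.exp_one_lt_d9.le
        _ ≤ 3 := by norm_num
    linarith
  have hphiB : Real.exp (-1) ≤ phi B := by
    unfold phi
    rw [hsinB, hcosB]
    simp
    have : Real.exp (-1) < Real.exp 0 := Real.exp_lt_exp.mpr (by norm_num)
    rw [Real.exp_zero] at this
    linarith
  obtain ⟨v, hv, hveq⟩ := intermediate_value_Icc hAB hcont ⟨hphiA, hphiB⟩
  exact ⟨v, hv, hveq⟩

lemma key_complex (u v : ℝ) (hs : Real.sin v ≠ 0) (hu : u = -v * Real.cos v / Real.sin v)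
    (h : v / Real.sin v * Real.exp u = Real.exp (-1)) :
    ((u:ℂ) + v * Complex.I) * Complex.exp ((u:ℂ) + v * Complex.I) = -Complex.exp (-1) := by
  have h2 : u * Real.sin v = -v * Real.cos v := by
    rw [hu]; field_simp
  have h3 : v * Real.exp u = Real.exp (-1) * Real.sin v := by
    field_simp at h; linarith
  have pyth := Real.sin_sq_add_cos_sq v
  have he : Complex.exp ((u:ℂ) + v * Complex.I)
      = (Real.exp u : ℂ) * ((Real.cos v : ℂ) + (Real.sin v : ℂ) * Complex.I) := by
    rw [Complex.exp_add, Complex.exp_mul_I, ← Complex.ofReal_exp, ← Complex.ofReal_cos,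
      ← Complex.ofReal_sin]
  rw [he, show (-1 : ℂ) = ((-1 : ℝ) : ℂ) by norm_num, ← Complex.ofReal_exp]
  rw [Complex.ext_iff]
  simp only [Complex.mul_re, Complex.mul_im, Complex.add_re, Complex.add_im,
    Complex.ofReal_re, Complex.ofReal_im, Complex.I_re, Complex.I_im, Complex.neg_re,
    Complex.neg_im, mul_zero, mul_one, zero_mul, sub_zero, add_zero, zero_add, neg_zero,
    zero_sub, mul_neg]
  constructor
  · -- real part
    apply mul_left_cancel₀ hs
    linear_combination (Real.exp u * Real.cos v) * h2 + (-(Real.exp u * v)) * pyth + (-1) * h3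
  · -- imaginary part
    linear_combination Real.exp u * h2

/-- For every complex parameter `a ≠ 0`, the fixed point `-a` is not an exceptional
value of `f_a(z) = a (z - (1 - a)) exp(z + a)`: the preimage set
`{z ∈ ℂ : f_a(z) = -a}` is infinite. -/
theorem stmt_19 (a : ℂ) (ha : a ≠ 0) :
    {z : ℂ | a * (z - (1 - a)) * Complex.exp (z + a) = -a}.Infinite := by
  have hπ := Real.pi_pos
  choose v hv hveq using exists_v
  have hsin : ∀ k, Real.sin (v k) ≠ 0 := by
    intro k
    have h1 := sin_pos_on k (hv k)
    have h2 : (0:ℝ) < Real.sqrt 2 / 2 := by positivity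
    linarith
  set u : ℕ → ℝ := fun k => -(v k) * Real.cos (v k) / Real.sin (v k) with hu
  set z : ℕ → ℂ := fun k => ((u k : ℂ) + (v k : ℂ) * Complex.I) + (1 - a) with hz
  have hmono : StrictMono v := by
    intro k l hkl
    have h1 := (hv k).2
    have h2 := (hv l).1
    have hcast : (k:ℝ) + 1 + 1 ≤ (l:ℝ) + 1 := by
      have : (k:ℝ) + 1 ≤ (l:ℝ) := by exact_mod_cast Nat.succ_le_of_lt hkl
      linarith
    have h3 : ((k:ℝ)+1+1)*(2*π) ≤ ((l:ℝ)+1)*(2*π) :=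
      mul_le_mul_of_nonneg_right hcast (by positivity)
    linarith
  apply Set.infinite_of_injective_forall_mem (f := z)
  · intro k l hkl
    have him : (z k).im = (z l).im := by rw [hkl]
    simp only [hz, Complex.add_im, Complex.mul_im, Complex.ofReal_re, Complex.ofReal_im,
      Complex.I_re, Complex.I_im, Complex.sub_im, Complex.one_im] at him
    have : v k = v l := by simpa using him
    exact hmono.injective this
  · intro k
    simp only [Set.mem_setOf_eq]
    set w : ℂ := (u k : ℂ) + (v k : ℂ) * Complex.I with hw
    have hweq : w * Complex.exp w = -Complex.exp (-1) := by
      apply key_complex (u k) (v k) (hsin k) rfl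
      have := hveq k
      unfold phi at this
      simpa [hu] using this
    have h1 : Complex.exp (-1) * Complex.exp 1 = 1 := by
      rw [← Complex.exp_add]; norm_num
    calc a * (z k - (1 - a)) * Complex.exp (z k + a)
        = a * (w * Complex.exp w) * Complex.exp 1 := by
          rw [show z k - (1 - a) = w by simp [hz, hw],
            show z k + a = w + 1 by simp [hz, hw]; ring_nf, Complex.exp_add]
          ring
      _ = a * (-Complex.exp (-1)) * Complex.exp 1 := by rw [hweq]
      _ = -a := by linear_combination (-a) * h1
end
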